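/- arXiv:2405.20601 — 2 statements merged into one kernel-verified Lean document; each statement's English description precedes it below -/
import Mathlib

section
/- For Gaussian densities N(0, φH^{-1}) and N(0, λ^{-1}H^{-1}) in ℝ^P with H positive definite, a ≤ φ ≤ b, λ^{-1} ∈ [a, b], and |λ - φ^{-1}| ≤ δ with φ^{-1} ≥ λ, the total variation distance satisfies ∫ |N^{λ^{-1}} - N^φ| ≤ C δ for a constant C depending only on P, a, b. -/
/-!
Both densities integrate to one, and for `φ ≤ σ := λ⁻¹` the narrower one is dominated by the wider:
`N^φ ≤ r N^σ` with `r = (σ/φ)^(P/2)`. For two probability densities with `g ≤ r f` one has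
`|f - g| ≤ (r f - f) + (r f - g)` pointwise, so `∫ |N^σ - N^φ| ≤ 2 (r - 1)`. By the mean value
theorem `r - 1 ≤ (P/2) (b/a)^(P/2) (σ/φ - 1)`, and `σ/φ - 1 = σ (φ⁻¹ - λ) ≤ b δ`.
The normalisations come from the substitution `v = √H h`, which turns `h ⬝ᵥ H h` into `‖v‖²`.
-/

open Real MeasureTheory Matrix

section GaussianIntegral

open scoped MatrixOrder

variable {ι : Type*} [Fintype ι]

lemma integrable_exp_neg_mul_sum_sq {c : ℝ} (hc : 0 < c) :
    Integrable (fun v : ι → ℝ => exp (-c * ∑ i, v i ^ 2)) := by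
  simp only [Finset.mul_sum, exp_sum]
  exact Integrable.fintype_prod (f := fun _ x => exp (-c * x ^ 2))
    fun _ => integrable_exp_neg_mul_sq hc

lemma integral_exp_neg_mul_sum_sq {c : ℝ} (hc : 0 < c) :
    ∫ v : ι → ℝ, exp (-c * ∑ i, v i ^ 2) = (π / c) ^ ((Fintype.card ι : ℝ) / 2) := by
  simp only [Finset.mul_sum, exp_sum]
  rw [integral_fintype_prod_volume_eq_prod (f := fun _ x => exp (-c * x ^ 2)),
    Finset.prod_const, integral_gaussian, sqrt_eq_rpow, Finset.card_univ, ← rpow_natCast,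
    ← rpow_mul (div_pos pi_pos hc).le]
  ring_nf

variable [DecidableEq ι] {S : Matrix ι ι ℝ} {E : Type*} [NormedAddCommGroup E]

lemma measurableEmbedding_mulVec (hS : S.det ≠ 0) :
    MeasurableEmbedding (fun v : ι → ℝ => S *ᵥ v) := by
  have hdet : LinearMap.det (toLin' S) ≠ 0 := by rwa [LinearMap.det_toLin']
  exact (LinearMap.equivOfDetNeZero _ hdet).toContinuousLinearEquiv.toHomeomorph.measurableEmbedding

lemma map_mulVec_volume (hS : S.det ≠ 0) :
    Measure.map (fun v : ι → ℝ => S *ᵥ v) volume = ENNReal.ofReal |S.det⁻¹| • volume :=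
  Real.map_matrix_volume_pi_eq_smul_volume_pi hS

lemma integrable_comp_mulVec_iff (hS : S.det ≠ 0) {g : (ι → ℝ) → E} :
    Integrable (fun v => g (S *ᵥ v)) ↔ Integrable g := by
  rw [← Function.comp_def, ← (measurableEmbedding_mulVec hS).integrable_map_iff,
    map_mulVec_volume hS]
  exact integrable_smul_measure (by simpa using hS) ENNReal.ofReal_ne_top

lemma integral_comp_mulVec [NormedSpace ℝ E] (hS : S.det ≠ 0) (g : (ι → ℝ) → E) :
    ∫ v, g (S *ᵥ v) = |S.det|⁻¹ • ∫ v, g v := by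
  rw [← (measurableEmbedding_mulVec hS).integral_map, map_mulVec_volume hS,
    integral_smul_measure, ENNReal.toReal_ofReal (abs_nonneg _), abs_inv]

lemma Matrix.PosSemidef.dotProduct_mulVec_eq_sum_sq_sqrt {H : Matrix ι ι ℝ} (hH : H.PosSemidef)
    (h : ι → ℝ) : h ⬝ᵥ H *ᵥ h = ∑ i, (CFC.sqrt H *ᵥ h) i ^ 2 := by
  have hST : (CFC.sqrt H)ᵀ = CFC.sqrt H := (CFC.sqrt_nonneg H).posSemidef.1
  conv_lhs => rw [← CFC.sqrt_mul_sqrt_self H hH.nonneg, ← mulVec_mulVec, dotProduct_mulVec,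
    ← hST, vecMul_transpose]
  simp only [dotProduct, sq, hST]

lemma Matrix.PosDef.abs_det_sqrt {H : Matrix ι ι ℝ} (hH : H.PosDef) :
    |(CFC.sqrt H).det| = √H.det := by
  rw [← sqrt_sq_eq_abs, sq, ← det_mul, CFC.sqrt_mul_sqrt_self H hH.posSemidef.nonneg]

lemma Matrix.PosDef.integrable_exp_neg_mul_dotProduct_mulVec {H : Matrix ι ι ℝ} (hH : H.PosDef)
    {c : ℝ} (hc : 0 < c) : Integrable (fun h : ι → ℝ => exp (-c * (h ⬝ᵥ H *ᵥ h))) := by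
  have hS := hH.abs_det_sqrt ▸ sqrt_pos.2 hH.det_pos
  simp_rw [hH.posSemidef.dotProduct_mulVec_eq_sum_sq_sqrt]
  exact (integrable_comp_mulVec_iff (abs_pos.1 hS)).2 (integrable_exp_neg_mul_sum_sq hc)

lemma Matrix.PosDef.integral_exp_neg_mul_dotProduct_mulVec {H : Matrix ι ι ℝ} (hH : H.PosDef)
    {c : ℝ} (hc : 0 < c) :
    ∫ h : ι → ℝ, exp (-c * (h ⬝ᵥ H *ᵥ h)) = (π / c) ^ ((Fintype.card ι : ℝ) / 2) / √H.det := by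
  have hS := hH.abs_det_sqrt ▸ sqrt_pos.2 hH.det_pos
  simp_rw [hH.posSemidef.dotProduct_mulVec_eq_sum_sq_sqrt]
  rw [integral_comp_mulVec (abs_pos.1 hS) (fun v => exp (-c * ∑ i, v i ^ 2)),
    integral_exp_neg_mul_sum_sq hc, hH.abs_det_sqrt, smul_eq_mul, inv_mul_eq_div]

end GaussianIntegral

lemma integral_abs_sub_le_of_le_mul {α : Type*} [MeasurableSpace α] {μ : Measure α}
    {f g : α → ℝ} {r : ℝ} (hf : Integrable f μ) (hg : Integrable g μ)
    (hfg : ∫ x, f x ∂μ = ∫ x, g x ∂μ) (hf0 : ∀ x, 0 ≤ f x) (hr : 1 ≤ r)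
    (hgf : ∀ x, g x ≤ r * f x) :
    ∫ x, |f x - g x| ∂μ ≤ 2 * (r - 1) * ∫ x, f x ∂μ := by
  have hpt : ∀ x, |f x - g x| ≤ 2 * r * f x - f x - g x := fun x => by
    have := mul_le_mul_of_nonneg_right hr (hf0 x)
    exact abs_sub_le_iff.2 ⟨by linarith [hgf x], by linarith [hgf x]⟩
  calc ∫ x, |f x - g x| ∂μ ≤ ∫ x, (2 * r * f x - f x - g x) ∂μ :=
        integral_mono (hf.sub hg).abs (((hf.const_mul _).sub hf).sub hg) hpt
    _ = 2 * (r - 1) * ∫ x, f x ∂μ := by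
        have h2rf : Integrable (fun x => 2 * r * f x - f x) μ := (hf.const_mul _).sub hf
        rw [integral_sub h2rf hg, integral_sub (hf.const_mul _) hf, integral_const_mul, ← hfg]
        ring

lemma rpow_sub_one_le_mul {p M x : ℝ} (hp : 0 ≤ p) (hx : 1 ≤ x) (hxM : x ≤ M) :
    x ^ p - 1 ≤ p * M ^ p * (x - 1) := by
  have hM : 1 ≤ M := hx.trans hxM
  have hderiv : ∀ t ∈ interior (Set.Icc 1 M), deriv (fun t : ℝ => t ^ p) t ≤ p * M ^ p := by
    rw [interior_Icc]
    rintro t ⟨ht1, htM⟩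
    rw [Real.deriv_rpow_const]
    gcongr
    calc t ^ (p - 1) ≤ t ^ p := rpow_le_rpow_of_exponent_le ht1.le (by linarith)
      _ ≤ M ^ p := rpow_le_rpow (by linarith) htM.le hp
  simpa only [one_rpow] using (convex_Icc 1 M).image_sub_le_mul_sub_of_deriv_le
    (continuous_rpow_const hp).continuousOn
    (fun t ht => (differentiableAt_rpow_const_of_ne p
      (by rw [interior_Icc] at ht; linarith [ht.1])).differentiableWithinAt)
    hderiv 1 ⟨le_rfl, hM⟩ x ⟨hx, hxM⟩ hx

section GaussianDensity

variable {ι : Type*} [Fintype ι] [DecidableEq ι] {H : Matrix ι ι ℝ}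

/-- The density `N^σ` of the centred normal law with covariance `σ H⁻¹`. -/
noncomputable def gaussianDensity (H : Matrix ι ι ℝ) (σ : ℝ) (h : ι → ℝ) : ℝ :=
  √H.det / (2 * π * σ) ^ ((Fintype.card ι : ℝ) / 2) * exp (-(h ⬝ᵥ H *ᵥ h) / (2 * σ))

lemma gaussianDensity_nonneg (H : Matrix ι ι ℝ) {σ : ℝ} (hσ : 0 ≤ σ) (h : ι → ℝ) :
    0 ≤ gaussianDensity H σ h := by
  unfold gaussianDensity
  positivity

lemma gaussianDensity_eq_mul_exp_neg_mul (H : Matrix ι ι ℝ) (σ : ℝ) (h : ι → ℝ) :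
    gaussianDensity H σ h =
      √H.det / (2 * π * σ) ^ ((Fintype.card ι : ℝ) / 2) * exp (-(2 * σ)⁻¹ * (h ⬝ᵥ H *ᵥ h)) := by
  rw [gaussianDensity, neg_mul, ← div_eq_inv_mul, neg_div]

lemma Matrix.PosDef.integrable_gaussianDensity (hH : H.PosDef) {σ : ℝ} (hσ : 0 < σ) :
    Integrable (gaussianDensity H σ) := by
  simp_rw [funext (gaussianDensity_eq_mul_exp_neg_mul H σ)]
  exact (hH.integrable_exp_neg_mul_dotProduct_mulVec (by positivity)).const_mul _

lemma Matrix.PosDef.integral_gaussianDensity (hH : H.PosDef) {σ : ℝ} (hσ : 0 < σ) :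
    ∫ h, gaussianDensity H σ h = 1 := by
  have hdet := sqrt_pos.2 hH.det_pos
  simp_rw [gaussianDensity_eq_mul_exp_neg_mul]
  rw [integral_const_mul, hH.integral_exp_neg_mul_dotProduct_mulVec (by positivity),
    div_inv_eq_mul, show π * (2 * σ) = 2 * π * σ by ring]
  field_simp

lemma gaussianDensity_le_rpow_mul (hH : H.PosSemidef) {φ σ : ℝ} (hφ : 0 < φ) (hφσ : φ ≤ σ)
    (h : ι → ℝ) :
    gaussianDensity H φ h ≤ (σ / φ) ^ ((Fintype.card ι : ℝ) / 2) * gaussianDensity H σ h := by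
  have hq : 0 ≤ h ⬝ᵥ H *ᵥ h := hH.dotProduct_mulVec_nonneg h
  have hσ : 0 < σ := hφ.trans_le hφσ
  calc gaussianDensity H φ h
      ≤ √H.det / (2 * π * φ) ^ ((Fintype.card ι : ℝ) / 2) * exp (-(h ⬝ᵥ H *ᵥ h) / (2 * σ)) := by
        unfold gaussianDensity
        gcongr _ * exp ?_
        rw [neg_div, neg_div, neg_le_neg_iff]
        gcongr
    _ = (σ / φ) ^ ((Fintype.card ι : ℝ) / 2) * gaussianDensity H σ h := by
        rw [gaussianDensity, div_rpow hσ.le hφ.le, mul_rpow (by positivity) hσ.le,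
          mul_rpow (by positivity) hφ.le]
        field_simp

lemma Matrix.PosDef.integral_abs_sub_gaussianDensity_le (hH : H.PosDef) {φ σ : ℝ} (hφ : 0 < φ)
    (hφσ : φ ≤ σ) :
    ∫ h, |gaussianDensity H σ h - gaussianDensity H φ h| ≤
      2 * ((σ / φ) ^ ((Fintype.card ι : ℝ) / 2) - 1) := by
  have hσ : 0 < σ := hφ.trans_le hφσ
  simpa only [hH.integral_gaussianDensity hσ, mul_one] using
    integral_abs_sub_le_of_le_mul (hH.integrable_gaussianDensity hσ)
      (hH.integrable_gaussianDensity hφ)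
      (by rw [hH.integral_gaussianDensity hσ, hH.integral_gaussianDensity hφ])
      (gaussianDensity_nonneg H hσ.le) (one_le_rpow ((one_le_div hφ).2 hφσ) (by positivity))
      (gaussianDensity_le_rpow_mul hH.posSemidef hφ hφσ)

end GaussianDensity

/-- Total variation bound for Gaussian densities `N(0, σ H⁻¹)` on `ℝ^P`:
for `φ ∈ [a,b]`, `λ ∈ [b⁻¹, a⁻¹]` with `0 ≤ φ⁻¹ - λ ≤ δ`, the `L¹` distance
between the densities with variances `λ⁻¹ H⁻¹` and `φ H⁻¹` is at most `C δ`
for a constant `C` depending only on `P`, `a`, `b`. -/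
theorem gaussian_tv_bound
    (P : ℕ) (hP : 1 ≤ P) (a b : ℝ) (ha : 0 < a) (hab : a < b) :
    ∃ C : ℝ, 0 < C ∧
      ∀ (H : Matrix (Fin P) (Fin P) ℝ), H.PosDef →
      ∀ φ lam δ : ℝ, φ ∈ Set.Icc a b → lam ∈ Set.Icc b⁻¹ a⁻¹ →
        0 ≤ φ⁻¹ - lam → φ⁻¹ - lam ≤ δ →
        (∫ h : Fin P → ℝ,
          |Real.sqrt H.det / ((2 * π * lam⁻¹) ^ ((P : ℝ) / 2)) *
              exp (-(h ⬝ᵥ (H *ᵥ h)) / (2 * lam⁻¹)) -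
            Real.sqrt H.det / ((2 * π * φ) ^ ((P : ℝ) / 2)) *
              exp (-(h ⬝ᵥ (H *ᵥ h)) / (2 * φ))|) ≤ C * δ := by
  have hb : 0 < b := ha.trans hab
  refine ⟨P * (b / a) ^ ((P : ℝ) / 2) * b, by positivity, ?_⟩
  rintro H hH φ lam δ ⟨hφa, -⟩ ⟨hlamb, -⟩ hε hδ
  have hφ : 0 < φ := ha.trans_le hφa
  have hlam : 0 < lam := (inv_pos.2 hb).trans_le hlamb
  have hσb : lam⁻¹ ≤ b := inv_le_of_inv_le₀ hb hlamb
  have hφσ : φ ≤ lam⁻¹ := (le_inv_comm₀ hφ hlam).2 (by linarith)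
  have hratio : lam⁻¹ / φ ≤ b / a := div_le_div₀ hb.le hσb ha hφa
  have hratio_sub : lam⁻¹ / φ - 1 = lam⁻¹ * (φ⁻¹ - lam) := by field_simp
  calc _ ≤ 2 * ((lam⁻¹ / φ) ^ ((P : ℝ) / 2) - 1) := by
        simpa [gaussianDensity] using hH.integral_abs_sub_gaussianDensity_le hφ hφσ
    _ ≤ 2 * ((P / 2) * (b / a) ^ ((P : ℝ) / 2) * (lam⁻¹ / φ - 1)) := by
        gcongr
        exact rpow_sub_one_le_mul (by positivity) ((one_le_div hφ).2 hφσ) hratio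
    _ = P * (b / a) ^ ((P : ℝ) / 2) * lam⁻¹ * (φ⁻¹ - lam) := by rw [hratio_sub]; ring
    _ ≤ P * (b / a) ^ ((P : ℝ) / 2) * b * δ := by gcongr
end

section
/- Let φ_n ~ InvGamma(n/2, n c_n / 2) truncated to [a,b], where c_n → φ₀ ∈ (a, b). Then φ_n converges in distribution to the point mass at φ₀. -/
open Real MeasureTheory Filter

open Set Topology

/-!
Write the truncated inverse gamma density as a Gibbs density
`x ↦ exp (-(t_n G_n(x))) / ∫ exp (-(t_n G_n))` on `[a, b]`, with inverse temperature
`t_n = n/2 + 1 → ∞` and energy `G_n(x) = log x + c'_n / x`, where `c'_n = n c_n / (n + 2) → φ₀`.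
The energies converge uniformly on `[a, b]` to `h(x) = log x + φ₀ / x`, which has a strict
minimum at `φ₀` since `log u < u - 1` for `u ≠ 1`. Laplace's method then shows that the
Gibbs densities vanish uniformly away from `φ₀`: off a neighbourhood `u` of `φ₀` the energy
exceeds its value near `φ₀` by a fixed margin `η`, so the density there is `O(e^{-t_n η})`.
They are therefore peak functions at `φ₀`, and integrating a continuous `f` against them
converges to `f φ₀`.
-/

noncomputable def gibbsDensity {α : Type*} [MeasurableSpace α] (μ : Measure α) (s : Set α)
    (t : ℝ) (g : α → ℝ) (x : α) : ℝ :=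
  exp (-(t * g x)) / ∫ y in s, exp (-(t * g y)) ∂μ

section Gibbs

variable {α : Type*} [MeasurableSpace α] {μ : Measure α} {s : Set α}

theorem gibbsDensity_nonneg {t : ℝ} {g : α → ℝ} (x : α) : 0 ≤ gibbsDensity μ s t g x :=
  div_nonneg (exp_pos _).le (integral_nonneg fun _ => (exp_pos _).le)

theorem setIntegral_gibbsDensity {t : ℝ} {g : α → ℝ}
    (hg : IntegrableOn (fun x => exp (-(t * g x))) s μ) (hs : μ s ≠ 0) :
    ∫ x in s, gibbsDensity μ s t g x ∂μ = 1 := by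
  have : NeZero (μ.restrict s) := ⟨by rwa [Ne, Measure.restrict_eq_zero]⟩
  simp only [gibbsDensity]
  rw [integral_div]
  exact div_self (integral_exp_pos hg).ne'

theorem gibbsDensity_le_inv_measureReal_mul_exp {t : ℝ} (ht : 0 ≤ t) {g : α → ℝ}
    (hg : IntegrableOn (fun x => exp (-(t * g x))) s μ) {w : Set α} (hw : MeasurableSet w)
    (hws : w ⊆ s) (hμw : 0 < μ.real w) {c η : ℝ} (hgw : ∀ z ∈ w, g z ≤ c) {x : α}
    (hx : c + η ≤ g x) :
    gibbsDensity μ s t g x ≤ (μ.real w)⁻¹ * exp (-(t * η)) := by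
  have hnum : exp (-(t * g x)) ≤ exp (-(t * (c + η))) := by gcongr
  have hden : μ.real w * exp (-(t * c)) ≤ ∫ z in s, exp (-(t * g z)) ∂μ :=
    calc μ.real w * exp (-(t * c))
        = ∫ _ in w, exp (-(t * c)) ∂μ := by simp
      _ ≤ ∫ z in w, exp (-(t * g z)) ∂μ :=
        setIntegral_mono_on (integrableOn_const (ENNReal.toReal_pos_iff.1 hμw).2.ne)
          (hg.mono_set hws) hw fun z hz => by gcongr; exact hgw z hz
      _ ≤ ∫ z in s, exp (-(t * g z)) ∂μ :=
        setIntegral_mono_set hg (Eventually.of_forall fun _ => (exp_pos _).le)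
          (Eventually.of_forall hws)
  calc gibbsDensity μ s t g x
      ≤ exp (-(t * (c + η))) / (μ.real w * exp (-(t * c))) :=
        div_le_div₀ (exp_pos _).le hnum (by positivity) hden
    _ = (μ.real w)⁻¹ * exp (-(t * η)) := by
        rw [mul_add, neg_add, exp_add]
        field_simp

theorem tendstoUniformlyOn_gibbsDensity_zero [TopologicalSpace α] [T2Space α]
    [OpensMeasurableSpace α] [IsFiniteMeasureOnCompacts μ] (hs : IsCompact s)
    {x₀ : α} (hx₀ : x₀ ∈ s)
    (hμ : ∀ u, IsOpen u → x₀ ∈ u → 0 < μ (u ∩ s))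
    {h : α → ℝ} (hh : ContinuousOn h s) (hmin : ∀ y ∈ s, y ≠ x₀ → h x₀ < h y)
    {G : ℕ → α → ℝ} (hG : TendstoUniformlyOn G h atTop s) (hGc : ∀ n, ContinuousOn (G n) s)
    {t : ℕ → ℝ} (ht : Tendsto t atTop atTop) {u : Set α} (hu : IsOpen u) (hx₀u : x₀ ∈ u) :
    TendstoUniformlyOn (fun n => gibbsDensity μ s (t n) (G n)) 0 atTop (s \ u) := by
  rcases (s \ u).eq_empty_or_nonempty with hsu | hsu
  · rw [hsu]; exact tendstoUniformlyOn_empty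
  obtain ⟨y, hy, hymin⟩ := (hs.diff hu).exists_isMinOn hsu (hh.mono sdiff_subset)
  set η := (h y - h x₀) / 4 with hη_def
  have hη : 0 < η := by
    have := hmin y hy.1 fun hyx => hy.2 (hyx ▸ hx₀u)
    linarith
  obtain ⟨v, hv, hx₀v, hvh⟩ : ∃ v, IsOpen v ∧ x₀ ∈ v ∧ v ∩ s ⊆ h ⁻¹' Iio (h x₀ + η) :=
    _root_.continuousOn_iff.1 hh x₀ hx₀ _ isOpen_Iio (by simp [hη])
  have hμv : 0 < μ.real (v ∩ s) := ENNReal.toReal_pos (hμ v hv hx₀v).ne'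
    ((measure_mono inter_subset_right).trans_lt hs.measure_lt_top).ne
  -- On `v ∩ s` the energy is below `h x₀ + 2η`, on `s \ u` above `h x₀ + 3η`.
  have hbound : ∀ᶠ n in atTop, ∀ x ∈ s \ u,
      gibbsDensity μ s (t n) (G n) x ≤ (μ.real (v ∩ s))⁻¹ * exp (-(t n * η)) := by
    filter_upwards [Metric.tendstoUniformlyOn_iff.1 hG η hη, ht.eventually_ge_atTop 0]
      with n hGn htn x hx
    have hclose : ∀ z ∈ s, |G n z - h z| < η := fun z hz => by
      simpa [Real.dist_eq, abs_sub_comm] using hGn z hz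
    refine gibbsDensity_le_inv_measureReal_mul_exp htn
      (((hGc n).const_smul (t n)).neg.rexp.integrableOn_compact hs)
      (hv.measurableSet.inter hs.measurableSet) inter_subset_right hμv (c := h x₀ + 2 * η)
      (fun z hz => ?_) ?_
    · linarith [(abs_lt.1 (hclose z hz.2)).2, show h z < h x₀ + η from hvh hz]
    · linarith [(abs_lt.1 (hclose x hx.1)).1, show h y ≤ h x from hymin hx, hη_def]
  have hlim : Tendsto (fun n => (μ.real (v ∩ s))⁻¹ * exp (-(t n * η))) atTop (𝓝 0) := by
    simpa using (tendsto_exp_neg_atTop_nhds_zero.comp (ht.atTop_mul_const hη)).const_mul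
      (μ.real (v ∩ s))⁻¹
  refine Metric.tendstoUniformlyOn_iff.2 fun ε hε => ?_
  filter_upwards [hbound, hlim.eventually (gt_mem_nhds hε)] with n hn hnε x hx
  rw [Pi.zero_apply, dist_zero_left, Real.norm_of_nonneg (gibbsDensity_nonneg x)]
  exact (hn x hx).trans_lt hnε

theorem tendsto_setIntegral_gibbsDensity_smul [TopologicalSpace α] [T2Space α] [BorelSpace α]
    [IsFiniteMeasureOnCompacts μ] {E : Type*} [NormedAddCommGroup E] [NormedSpace ℝ E]
    [CompleteSpace E] (hs : IsCompact s) {x₀ : α} (hx₀ : x₀ ∈ s)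
    (hμ : ∀ u, IsOpen u → x₀ ∈ u → 0 < μ (u ∩ s))
    {h : α → ℝ} (hh : ContinuousOn h s) (hmin : ∀ y ∈ s, y ≠ x₀ → h x₀ < h y)
    {G : ℕ → α → ℝ} (hG : TendstoUniformlyOn G h atTop s) (hGc : ∀ n, ContinuousOn (G n) s)
    {t : ℕ → ℝ} (ht : Tendsto t atTop atTop) {f : α → E} (hf : ContinuousOn f s) :
    Tendsto (fun n => ∫ x in s, gibbsDensity μ s (t n) (G n) x • f x ∂μ) atTop (𝓝 (f x₀)) := by
  have hint : ∀ n, IntegrableOn (fun x => exp (-(t n * G n x))) s μ := fun n =>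
    ((hGc n).const_smul (t n)).neg.rexp.integrableOn_compact hs
  have hμs : μ s ≠ 0 := by simpa using (hμ univ isOpen_univ (mem_univ x₀)).ne'
  exact tendsto_setIntegral_peak_smul_of_integrableOn_of_tendsto hs.measurableSet
    hs.measurableSet subset_rfl self_mem_nhdsWithin hs.measure_lt_top.ne
    (Eventually.of_forall fun _ x _ => gibbsDensity_nonneg x)
    (fun u hu hx₀u => tendstoUniformlyOn_gibbsDensity_zero hs hx₀ hμ hh hmin hG hGc ht hu hx₀u)
    (tendsto_const_nhds.congr fun n => (setIntegral_gibbsDensity (hint n) hμs).symm)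
    (Eventually.of_forall fun n => ((hint n).div_const _).aestronglyMeasurable)
    (hf.integrableOn_compact hs) (hf x₀ hx₀)

end Gibbs

theorem invGamma_kernel_eq_exp {x : ℝ} (hx : 0 < x) {ν : ℝ} (hν : ν + 2 ≠ 0) (c : ℝ) :
    x ^ (-ν / 2 - 1) * exp (-(ν * c) / (2 * x))
      = exp (-((ν / 2 + 1) * (log x + ν / (ν + 2) * c / x))) := by
  rw [rpow_def_of_pos hx, ← exp_add]
  congr 1
  field_simp
  ring

theorem log_add_div_self_lt {φ x : ℝ} (hφ : 0 < φ) (hx : 0 < x) (hne : x ≠ φ) :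
    log φ + φ / φ < log x + φ / x := by
  have := log_lt_sub_one_of_pos (div_pos hφ hx) (by rwa [Ne, div_eq_one_iff_eq hx.ne', eq_comm])
  rw [log_div hφ.ne' hx.ne', div_self hφ.ne'] at *
  linarith

theorem tendstoUniformlyOn_log_add_div {a : ℝ} (ha : 0 < a) {c : ℕ → ℝ} {φ : ℝ}
    (hc : Tendsto c atTop (𝓝 φ)) :
    TendstoUniformlyOn (fun n x => log x + c n / x) (fun x => log x + φ / x) atTop (Ici a) := by
  refine Metric.tendstoUniformlyOn_iff.2 fun ε hε => ?_
  filter_upwards [Metric.tendsto_nhds.1 hc (ε * a) (by positivity)] with n hn x hx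
  have hx0 : 0 < x := ha.trans_le hx
  rw [Real.dist_eq] at hn ⊢
  calc |log x + φ / x - (log x + c n / x)| = |c n - φ| / x := by
        rw [show log x + φ / x - (log x + c n / x) = (φ - c n) / x by ring, abs_div,
          abs_of_pos hx0, abs_sub_comm]
    _ ≤ |c n - φ| / a := by gcongr; exact hx
    _ < ε := by rwa [div_lt_iff₀ ha]

theorem truncated_invGamma_concentrates_general
    (a b φ₀ : ℝ) (ha : 0 < a) (hφ₀ : φ₀ ∈ Set.Ioo a b)
    (c : ℕ → ℝ) (hc : Tendsto c atTop (nhds φ₀))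
    (dens : ℕ → ℝ → ℝ)
    (hdens : ∀ n x, dens n x
      = x ^ (-(n : ℝ) / 2 - 1) * exp (-((n : ℝ) * c n) / (2 * x)))
    (Z : ℕ → ℝ) (hZ : ∀ n, Z n = ∫ x in Set.Icc a b, dens n x) :
    ∀ f : ℝ → ℝ, Continuous f → (∃ M, ∀ x, |f x| ≤ M) →
      Tendsto (fun n => ∫ x in Set.Icc a b, f x * (dens n x / Z n)) atTop
        (nhds (f φ₀)) := by
  intro f hf _
  have hpos : ∀ x ∈ Icc a b, 0 < x := fun x hx => ha.trans_le hx.1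
  have hφ₀K : φ₀ ∈ Icc a b := Ioo_subset_Icc_self hφ₀
  set G : ℕ → ℝ → ℝ := fun n x => log x + (n : ℝ) / (n + 2) * c n / x
  have hdens' : ∀ n, ∀ x ∈ Icc a b, dens n x = exp (-(((n : ℝ) / 2 + 1) * G n x)) :=
    fun n x hx => (hdens n x).trans (invGamma_kernel_eq_exp (hpos x hx) (by positivity) _)
  have hZ' : ∀ n, Z n = ∫ x in Icc a b, exp (-(((n : ℝ) / 2 + 1) * G n x)) :=
    fun n => (hZ n).trans (setIntegral_congr_fun measurableSet_Icc (hdens' n))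
  have hμ : ∀ u, IsOpen u → φ₀ ∈ u → 0 < volume (u ∩ Icc a b) := fun u hu hφ₀u =>
    ((hu.inter isOpen_Ioo).measure_pos volume ⟨φ₀, hφ₀u, hφ₀⟩).trans_le
      (measure_mono (inter_subset_inter_right _ Ioo_subset_Icc_self))
  have hc' : Tendsto (fun n : ℕ => (n : ℝ) / (n + 2) * c n) atTop (𝓝 φ₀) := by
    simpa using (tendsto_natCast_div_add_atTop (2 : ℝ)).mul hc
  have ht : Tendsto (fun n : ℕ => (n : ℝ) / 2 + 1) atTop atTop :=
    tendsto_atTop_add_const_right _ 1 (tendsto_natCast_atTop_atTop.atTop_div_const two_pos)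
  have hlim := tendsto_setIntegral_gibbsDensity_smul (μ := volume) isCompact_Icc hφ₀K hμ
    (by fun_prop (disch := exact fun x hx => (hpos x hx).ne'))
    (fun y hy hne => log_add_div_self_lt (hpos φ₀ hφ₀K) (hpos y hy) hne)
    ((tendstoUniformlyOn_log_add_div ha hc').mono fun x hx => hx.1)
    (fun n => by fun_prop (disch := exact fun x hx => (hpos x hx).ne')) ht hf.continuousOn
  refine hlim.congr fun n => setIntegral_congr_fun measurableSet_Icc fun x hx => ?_
  rw [gibbsDensity, smul_eq_mul, mul_comm, hdens' n x hx, hZ' n]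

/-- If `φ_n` has the inverse gamma distribution with shape `n/2` and scale
`n c_n/2` truncated to `[a,b]` (density proportional to
`x^{-n/2-1} e^{-n c_n/(2x)}` on `[a,b]`), and `c_n → φ₀ ∈ (a,b)`, then `φ_n`
converges in distribution to the point mass at `φ₀`. -/
theorem truncated_invGamma_concentrates
    (a b φ₀ : ℝ) (ha : 0 < a) (hab : a < b) (hφ₀ : φ₀ ∈ Set.Ioo a b)
    (c : ℕ → ℝ) (hc : Tendsto c atTop (nhds φ₀))
    (dens : ℕ → ℝ → ℝ)
    (hdens : ∀ n x, dens n x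
      = x ^ (-(n : ℝ) / 2 - 1) * exp (-((n : ℝ) * c n) / (2 * x)))
    (Z : ℕ → ℝ) (hZ : ∀ n, Z n = ∫ x in Set.Icc a b, dens n x) :
    ∀ f : ℝ → ℝ, Continuous f → (∃ M, ∀ x, |f x| ≤ M) →
      Tendsto (fun n => ∫ x in Set.Icc a b, f x * (dens n x / Z n)) atTop
        (nhds (f φ₀)) :=
  truncated_invGamma_concentrates_general a b φ₀ ha hφ₀ c hc dens hdens Z hZ
end
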